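/- Let x ∈ ℝ^d be nonzero and let D₁, D₂ : Ω → {0,1}^d be random masks whose 2d coordinates are mutually independent, each Bernoulli(1/2). Then Var(IP(D₁ ⊙ x, D₂ ⊙ x)) ≤ 3/16, since ∑_{i=1}^d xᵢ⁴ ≤ ‖x‖₂⁴. -/

import Mathlib

/-!
Writing `Zᵢ = D₁ᵢ D₂ᵢ`, the metric is `IP = ∑ᵢ Zᵢ xᵢ² / ‖x‖²`, a convex combination of the
`Zᵢ ∈ {0, 1}`, so `IP ∈ [0, 1]`. By independence `𝔼 Zᵢ = 1/4`, hence `𝔼 IP = 1/4`, and the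
Bhatia–Davis inequality `Var X ≤ (1 - 𝔼 X) 𝔼 X` for `X ∈ [0, 1]` gives `Var IP ≤ 3/4 · 1/4`.
-/

open MeasureTheory ProbabilityTheory

/-- Element-wise (Hadamard) product of a mask `a` with a vector `x` in `ℝ^d`. -/
noncomputable def hadamard {d : ℕ} (a : Fin d → ℝ) (x : EuclideanSpace ℝ (Fin d)) :
    EuclideanSpace ℝ (Fin d) :=
  WithLp.toLp 2 (fun i => a i * x i)

/-- Information preservation metric relative to the (nonzero) vector `x`:
`IP(x₁, x₂) = ⟨x₁, x₂⟩ / ‖x‖²`. -/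
noncomputable def IP {d : ℕ} (x x₁ x₂ : EuclideanSpace ℝ (Fin d)) : ℝ :=
  (inner ℝ x₁ x₂ : ℝ) / ‖x‖ ^ 2

section Hadamard

variable {d : ℕ}

lemma IP_hadamard (a b : Fin d → ℝ) (x : EuclideanSpace ℝ (Fin d)) :
    IP x (hadamard a x) (hadamard b x) = (∑ i, a i * b i * x i ^ 2) / ‖x‖ ^ 2 := by
  simp only [IP, hadamard, PiLp.inner_apply, RCLike.inner_apply, conj_trivial]
  congr 1
  exact Finset.sum_congr rfl fun i _ => by ring

lemma IP_hadamard_mem_Icc (x : EuclideanSpace ℝ (Fin d)) {a b : Fin d → ℝ}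
    (hab : ∀ i, a i * b i ∈ Set.Icc (0 : ℝ) 1) :
    IP x (hadamard a x) (hadamard b x) ∈ Set.Icc (0 : ℝ) 1 := by
  rw [IP_hadamard]
  constructor
  · exact div_nonneg (Finset.sum_nonneg fun i _ => mul_nonneg (hab i).1 (sq_nonneg _))
      (sq_nonneg _)
  · refine div_le_one_of_le₀ ?_ (sq_nonneg _)
    rw [EuclideanSpace.real_norm_sq_eq]
    exact Finset.sum_le_sum fun i _ => mul_le_of_le_one_left (sq_nonneg _) (hab i).2

variable {Ω : Type*} [MeasurableSpace Ω] {μ : Measure Ω}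

lemma measurable_IP_hadamard (x : EuclideanSpace ℝ (Fin d)) {D₁ D₂ : Ω → Fin d → ℝ}
    (hD₁ : ∀ i, Measurable fun ω => D₁ ω i) (hD₂ : ∀ i, Measurable fun ω => D₂ ω i) :
    Measurable fun ω => IP x (hadamard (D₁ ω) x) (hadamard (D₂ ω) x) := by
  simp only [IP_hadamard]
  exact (Finset.measurable_sum _ fun i _ => ((hD₁ i).mul (hD₂ i)).mul_const _).div_const _

lemma integral_IP_hadamard {x : EuclideanSpace ℝ (Fin d)} (hx : x ≠ 0)
    {D₁ D₂ : Ω → Fin d → ℝ} {p : ℝ}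
    (hint : ∀ i, Integrable (fun ω => D₁ ω i * D₂ ω i) μ)
    (hp : ∀ i, ∫ ω, D₁ ω i * D₂ ω i ∂μ = p) :
    ∫ ω, IP x (hadamard (D₁ ω) x) (hadamard (D₂ ω) x) ∂μ = p := by
  simp only [IP_hadamard]
  rw [integral_div, integral_finsetSum _ fun i _ => (hint i).mul_const _]
  simp only [integral_mul_const, hp]
  rw [← Finset.mul_sum, ← EuclideanSpace.real_norm_sq_eq]
  exact mul_div_cancel_right₀ p (pow_ne_zero 2 (norm_ne_zero_iff.mpr hx))

end Hadamard

lemma integral_eq_measureReal_of_zero_or_one {Ω : Type*} [MeasurableSpace Ω] {μ : Measure Ω}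
    {X : Ω → ℝ} (hX : Measurable X) (h01 : ∀ ω, X ω = 0 ∨ X ω = 1) :
    ∫ ω, X ω ∂μ = μ.real {ω | X ω = 1} := by
  have hind : ∀ ω, X ω = {ω | X ω = 1}.indicator 1 ω := fun ω => by
    rcases h01 ω with h | h <;> simp [h]
  calc ∫ ω, X ω ∂μ = ∫ ω, {ω | X ω = 1}.indicator 1 ω ∂μ := integral_congr_ae (ae_of_all μ hind)
    _ = μ.real {ω | X ω = 1} := integral_indicator_one (hX (measurableSet_singleton 1))

lemma mem_Icc_of_zero_or_one {a : ℝ} (h : a = 0 ∨ a = 1) : a ∈ Set.Icc (0 : ℝ) 1 := by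
  rcases h with rfl | rfl <;> simp

/-- For nonzero `x ∈ ℝ^d` and random masks `D₁, D₂ : Ω → {0,1}^d` whose `2d`
coordinates are mutually independent, each Bernoulli(1/2),
`Var(IP(D₁ ⊙ x, D₂ ⊙ x)) ≤ 3/16`, since `∑ᵢ xᵢ⁴ ≤ ‖x‖⁴`. -/
theorem random_masks_variance_IP_le {d : ℕ}
    (x : EuclideanSpace ℝ (Fin d)) (hx : x ≠ 0)
    {Ω : Type*} [MeasureSpace Ω] [IsProbabilityMeasure (ℙ : Measure Ω)]
    (D₁ D₂ : Ω → Fin d → ℝ)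
    (hbin : ∀ ω i, (D₁ ω i = 0 ∨ D₁ ω i = 1) ∧ (D₂ ω i = 0 ∨ D₂ ω i = 1))
    (hmeas : ∀ i, Measurable (fun ω => D₁ ω i) ∧ Measurable (fun ω => D₂ ω i))
    (hindep : iIndepFun
      (fun (p : Fin 2 × Fin d) ω => if p.1 = 0 then D₁ ω p.2 else D₂ ω p.2) ℙ)
    (hber : ∀ i, ℙ {ω | D₁ ω i = 1} = 1/2 ∧ ℙ {ω | D₂ ω i = 1} = 1/2) :
    variance (fun ω => IP x (hadamard (D₁ ω) x) (hadamard (D₂ ω) x)) ℙ ≤ 3/16 := by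
  have hZ : ∀ ω i, D₁ ω i * D₂ ω i ∈ Set.Icc (0 : ℝ) 1 := fun ω i =>
    unitInterval.mul_mem (mem_Icc_of_zero_or_one (hbin ω i).1)
      (mem_Icc_of_zero_or_one (hbin ω i).2)
  have hmean : ∀ i, ∫ ω, D₁ ω i ∂ℙ = 1/2 ∧ ∫ ω, D₂ ω i ∂ℙ = 1/2 := fun i => by
    simp only [integral_eq_measureReal_of_zero_or_one (hmeas i).1 fun ω => (hbin ω i).1,
      integral_eq_measureReal_of_zero_or_one (hmeas i).2 fun ω => (hbin ω i).2,
      measureReal_def, (hber i).1, (hber i).2]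
    norm_num
  have hpair : ∀ i, IndepFun (fun ω => D₁ ω i) (fun ω => D₂ ω i) ℙ := fun i => by
    simpa using hindep.indepFun (i := ((0 : Fin 2), i)) (j := (1, i)) (by simp)
  have hprod : ∀ i, ∫ ω, D₁ ω i * D₂ ω i ∂ℙ = 1/4 := fun i => by
    have := (hpair i).integral_mul_eq_mul_integral (hmeas i).1.aestronglyMeasurable
      (hmeas i).2.aestronglyMeasurable
    simp only [Pi.mul_apply, (hmean i).1, (hmean i).2] at this
    rw [this]
    norm_num
  have hint : ∀ i, Integrable (fun ω => D₁ ω i * D₂ ω i) ℙ := fun i =>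
    .of_mem_Icc 0 1 ((hmeas i).1.mul (hmeas i).2).aemeasurable (ae_of_all _ (hZ · i))
  calc variance _ ℙ ≤ (1 - 1/4) * (1/4 - 0) := by
        have := variance_le_sub_mul_sub (ae_of_all ℙ fun ω => IP_hadamard_mem_Icc x (hZ ω))
          (measurable_IP_hadamard x (hmeas · |>.1) (hmeas · |>.2)).aemeasurable
        rwa [integral_IP_hadamard hx hint hprod] at this
    _ = 3/16 := by norm_num
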